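/- arXiv:2311.10192 — 3 statements merged into one kernel-verified Lean document; each statement's English description precedes it below -/
import Mathlib

section
/- Let x : ℝ → ℝ² be a three times continuously differentiable, 2π-periodic parametrization with |x′(s)| > 0 for all s, and for σ ≠ s (σ near s) define h₂(s,σ) = −(x′(s) · x′(σ)) / (|x′(s)| r(s,σ)) + ((x(s) − x(σ)) · x′(σ)) ((x(s) − x(σ)) · x′(s)) / (|x′(s)| r(s,σ)³). Then for every s ∈ ℝ, h₂(s,σ) tends to 0 as σ tends to s with σ ≠ s. -/
/-!
With `u = x s - x σ`, `a = x' s`, `b = x' σ` and `ω` the area form of the plane, the Lagrange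
identity `⟪u, a⟫⟪u, b⟫ + ω u a · ω u b = ‖u‖²⟪a, b⟫` turns `h₂` into
`-(ω u a · ω u b) / (‖a‖ ‖u‖³)`. Both area forms vanish to second order in `σ - s`, since `u` is
parallel to `a` up to `O((σ - s)²)` and `b - a = O(σ - s)`, while `‖u‖ ≥ c |σ - s|` because
`a ≠ 0`. Hence `h₂ = O(σ - s)`.
-/

open Filter Asymptotics Topology

section MeanValue

variable {E : Type*} [NormedAddCommGroup E] [NormedSpace ℝ E]

theorem isBigO_sub_pow_succ_of_hasDerivAt {f f' : ℝ → E} {x₀ : ℝ} {n : ℕ}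
    (hff' : ∀ᶠ x in 𝓝 x₀, HasDerivAt f (f' x) x) (hf' : f' =O[𝓝 x₀] fun x ↦ (x - x₀) ^ n) :
    (fun x ↦ f x - f x₀) =O[𝓝 x₀] fun x ↦ (x - x₀) ^ (n + 1) := by
  obtain ⟨C, hC0, hC⟩ := hf'.exists_pos
  obtain ⟨δ, hδ, hball⟩ := Metric.eventually_nhds_iff_ball.mp (hff'.and hC.bound)
  refine IsBigO.of_bound C (Metric.eventually_nhds_iff_ball.mpr ⟨δ, hδ, fun x hx ↦ ?_⟩)
  have hseg : segment ℝ x₀ x ⊆ Metric.ball x₀ δ :=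
    (convex_ball x₀ δ).segment_subset (Metric.mem_ball_self hδ) hx
  have key := (convex_segment x₀ x).norm_image_sub_le_of_norm_hasDerivWithin_le
    (fun y hy ↦ (hball y (hseg hy)).1.hasDerivWithinAt) (C := C * ‖x - x₀‖ ^ n)
    (fun y hy ↦ (hball y (hseg hy)).2.trans <| by
      rw [norm_pow]
      gcongr
      exact norm_sub_le_of_mem_segment hy)
    (left_mem_segment ℝ x₀ x) (right_mem_segment ℝ x₀ x)
  calc ‖f x - f x₀‖ ≤ C * ‖x - x₀‖ ^ n * ‖x - x₀‖ := key
    _ = C * ‖(x - x₀) ^ (n + 1)‖ := by rw [norm_pow, pow_succ, mul_assoc]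

theorem isBigO_sub_sub_smul_deriv {f : ℝ → E} {x₀ : ℝ}
    (hf : ∀ᶠ x in 𝓝 x₀, DifferentiableAt ℝ f x) (hf' : DifferentiableAt ℝ (deriv f) x₀) :
    (fun x ↦ f x - f x₀ - (x - x₀) • deriv f x₀) =O[𝓝 x₀] fun x ↦ (x - x₀) ^ 2 := by
  have hderiv : ∀ᶠ x in 𝓝 x₀,
      HasDerivAt (fun y ↦ f y - (y - x₀) • deriv f x₀) (deriv f x - deriv f x₀) x := by
    filter_upwards [hf] with x hx
    simpa using hx.hasDerivAt.fun_sub (((hasDerivAt_id x).sub_const x₀).smul_const (deriv f x₀))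
  simpa [sub_right_comm] using
    isBigO_sub_pow_succ_of_hasDerivAt hderiv (by simpa using hf'.isBigO_sub)

end MeanValue

namespace Orientation

variable {E : Type*} [NormedAddCommGroup E] [InnerProductSpace ℝ E] [Fact (Module.finrank ℝ E = 2)]
  (o : Orientation ℝ E (Fin 2))

local notation "ω" => o.areaForm

theorem isBigO_areaForm {α : Type*} {l : Filter α} {v w : α → E} {g₁ g₂ : α → ℝ}
    (hv : v =O[l] g₁) (hw : w =O[l] g₂) : (fun a ↦ ω (v a) (w a)) =O[l] fun a ↦ g₁ a * g₂ a :=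
  (isBigO_of_le l fun a ↦ by simpa using o.abs_areaForm_le (v a) (w a)).trans
    (hv.norm_left.mul hw.norm_left)

theorem isBigO_areaForm_sub_sq {f w : ℝ → E} {s : ℝ}
    (hf : ∀ᶠ σ in 𝓝 s, DifferentiableAt ℝ f σ) (hf' : DifferentiableAt ℝ (deriv f) s)
    (hw : (fun σ ↦ w σ - deriv f s) =O[𝓝 s] fun σ ↦ σ - s) :
    (fun σ ↦ ω (f s - f σ) (w σ)) =O[𝓝 s] fun σ ↦ (σ - s) ^ 2 := by
  have hw_bdd : w =O[𝓝 s] fun _ ↦ (1 : ℝ) := by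
    have : Tendsto (fun σ ↦ w σ - deriv f s) (𝓝 s) (𝓝 0) :=
      hw.trans_tendsto (tendsto_sub_nhds_zero_iff.mpr tendsto_id)
    exact (tendsto_sub_nhds_zero_iff.mp this).isBigO_one ℝ
  have hsplit : ∀ σ, ω (f s - f σ) (w σ) =
      -ω (f σ - f s - (σ - s) • deriv f s) (w σ) - (σ - s) * ω (deriv f s) (w σ - deriv f s) := by
    intro σ
    simp [o.areaForm_apply_self]
  simp_rw [hsplit]
  refine IsBigO.sub (IsBigO.neg_left ?_) ?_
  · simpa using o.isBigO_areaForm (isBigO_sub_sub_smul_deriv hf hf') hw_bdd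
  · simpa [sq] using (isBigO_refl (fun σ ↦ σ - s) _).mul
      (o.isBigO_areaForm (isBigO_const_one ℝ (deriv f s) _) hw)

theorem neg_inner_div_add_inner_mul_inner_div (u a b : E) :
    -inner ℝ a b / (‖a‖ * ‖u‖) + inner ℝ u b * inner ℝ u a / (‖a‖ * ‖u‖ ^ 3) =
      -(ω u a * ω u b) / (‖a‖ * ‖u‖ ^ 3) := by
  rcases eq_or_ne u 0 with rfl | hu
  · simp
  have hu2 : ‖u‖ ^ 2 ≠ 0 := pow_ne_zero 2 (norm_ne_zero_iff.mpr hu)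
  rw [← mul_div_mul_right (-inner ℝ a b) _ hu2, show ‖a‖ * ‖u‖ * ‖u‖ ^ 2 = ‖a‖ * ‖u‖ ^ 3 by ring,
    ← add_div]
  congr 1
  linear_combination o.inner_mul_inner_add_areaForm_mul_areaForm u a b

end Orientation

section Kernel

variable {E : Type*} [NormedAddCommGroup E] [InnerProductSpace ℝ E]

noncomputable def kernelH₂ (x : ℝ → E) (s σ : ℝ) : ℝ :=
  -inner ℝ (deriv x s) (deriv x σ) / (‖deriv x s‖ * ‖x s - x σ‖) +
    inner ℝ (x s - x σ) (deriv x σ) * inner ℝ (x s - x σ) (deriv x s) /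
      (‖deriv x s‖ * ‖x s - x σ‖ ^ 3)

theorem tendsto_kernelH₂_nhdsNE [Fact (Module.finrank ℝ E = 2)] {x : ℝ → E} {s : ℝ}
    (hx : ∀ᶠ σ in 𝓝 s, DifferentiableAt ℝ x σ) (hx' : DifferentiableAt ℝ (deriv x) s)
    (hreg : deriv x s ≠ 0) :
    Tendsto (kernelH₂ x s) (𝓝[≠] s) (𝓝 0) := by
  have : FiniteDimensional ℝ E := .of_fact_finrank_eq_two
  let o : Orientation ℝ E (Fin 2) := (Module.finBasisOfFinrankEq ℝ E Fact.out).orientation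
  have hnum : (fun σ ↦ o.areaForm (x s - x σ) (deriv x s) * o.areaForm (x s - x σ) (deriv x σ))
      =O[𝓝[≠] s] fun σ ↦ (σ - s) ^ 2 * (σ - s) ^ 2 :=
    ((o.isBigO_areaForm_sub_sq hx hx' (by simpa using isBigO_zero _ _)).mul
      (o.isBigO_areaForm_sub_sq hx hx' hx'.isBigO_sub)).mono nhdsWithin_le_nhds
  have hlin : (fun σ ↦ σ - s) =O[𝓝 s] fun σ ↦ ‖x s - x σ‖ := by
    -- `HasDerivAt` is differentiability along pairs in `𝓝 s ×ˢ pure s`.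
    have := (hx.self_of_nhds.hasDerivAt.isTheta_sub hreg).isBigO_symm.norm_right.comp_tendsto
      (tendsto_id.prodMk tendsto_const_pure)
    simpa [Function.comp_def, norm_sub_rev] using this
  have hden : (fun σ ↦ (‖deriv x s‖ * ‖x s - x σ‖ ^ 3)⁻¹) =O[𝓝[≠] s] fun σ ↦ ((σ - s) ^ 3)⁻¹ := by
    refine IsBigO.inv_rev (((hlin.pow 3).trans (isBigO_self_const_mul
      (norm_ne_zero_iff.mpr hreg) _ _)).mono nhdsWithin_le_nhds) ?_
    filter_upwards [self_mem_nhdsWithin] with σ hσ h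
    exact absurd (pow_eq_zero_iff three_ne_zero |>.mp h) (sub_ne_zero.mpr hσ)
  refine IsBigO.trans_tendsto (g'' := fun σ ↦ σ - s) ?_ ?_
  · refine (hnum.neg_left.mul hden).congr' (.of_forall fun σ ↦ ?_) ?_
    · rw [kernelH₂, o.neg_inner_div_add_inner_mul_inner_div, div_eq_mul_inv]
    · filter_upwards [self_mem_nhdsWithin] with σ hσ
      field_simp [sub_ne_zero.mpr hσ]
  · exact tendsto_sub_nhds_zero_iff.mpr (tendsto_nhdsWithin_of_tendsto_nhds tendsto_id)

end Kernel

theorem stmt_1_general (x : ℝ → EuclideanSpace ℝ (Fin 2))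
    (hx : ContDiff ℝ 3 x)
    (hreg : ∀ s : ℝ, ‖deriv x s‖ > 0) (s : ℝ) :
    Tendsto (fun σ : ℝ =>
        -((inner ℝ (deriv x s) (deriv x σ) : ℝ)) / (‖deriv x s‖ * ‖x s - x σ‖) +
          ((inner ℝ (x s - x σ) (deriv x σ) : ℝ) * (inner ℝ (x s - x σ) (deriv x s) : ℝ)) /
            (‖deriv x s‖ * ‖x s - x σ‖ ^ 3))
      (nhdsWithin s {s}ᶜ) (nhds 0) := by
  have : Fact (Module.finrank ℝ (EuclideanSpace ℝ (Fin 2)) = 2) := ⟨finrank_euclideanSpace_fin⟩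
  exact tendsto_kernelH₂_nhdsNE (.of_forall (hx.differentiable (by norm_num)))
    ((hx.deriv' (n := 2)).differentiable (by norm_num)).differentiableAt (norm_pos_iff.mp (hreg s))

/-- For a `C³`, `2π`-periodic regular parametrization `x : ℝ → ℝ²`,
the function
`h₂(s,σ) = −(x′(s)·x′(σ))/(|x′(s)| r(s,σ)) + ((x(s)−x(σ))·x′(σ))((x(s)−x(σ))·x′(s))/(|x′(s)| r(s,σ)³)`
tends to `0` as `σ → s`, `σ ≠ s`. -/
theorem stmt_1 (x : ℝ → EuclideanSpace ℝ (Fin 2))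
    (hx : ContDiff ℝ 3 x)
    (hper : Function.Periodic x (2 * Real.pi))
    (hreg : ∀ s : ℝ, ‖deriv x s‖ > 0) (s : ℝ) :
    Tendsto (fun σ : ℝ =>
        -((inner ℝ (deriv x s) (deriv x σ) : ℝ)) / (‖deriv x s‖ * ‖x s - x σ‖) +
          ((inner ℝ (x s - x σ) (deriv x σ) : ℝ) * (inner ℝ (x s - x σ) (deriv x s) : ℝ)) /
            (‖deriv x s‖ * ‖x s - x σ‖ ^ 3))
      (nhdsWithin s {s}ᶜ) (nhds 0) :=
  stmt_1_general x hx hreg s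
end

section
/- Let κ > 0 and let f : [0,∞) → ℝ be continuously differentiable with f(0) = 0, and suppose there exist constants A ≥ 0 and a < κ with |f(t)| ≤ A e^{a t} and |f′(t)| ≤ A e^{a t} for all t ≥ 0. Then for every n ≥ 0, the n-th Laguerre coefficient of f′ satisfies ∫₀^∞ e^{−κ t} L_n(κ t) f′(t) dt = κ Σ_{m=0}^{n} f_m, where f_m = ∫₀^∞ e^{−κ t} L_m(κ t) f(t) dt. -/
/-!
Integration by parts against the weight `w_n(t) = e^{-κt} L_n(κt)`. From
`L_{n+1} - L_n = Σ_j C(n,j) (-t)^{j+1}/(j+1)!` one gets `L_{n+1}' - L_n' = -L_n`, hence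
`L_n' = -Σ_{m<n} L_m` and `w_n' = -κ e^{-κt} Σ_{m≤n} L_m(κt)`. The boundary term vanishes at `0`
because `f 0 = 0` and at `∞` because polynomials are `o(e^{εt})`, so that with `ε = (κ - a)/2`
all integrands are `O(e^{-εt})`.
-/

open Real MeasureTheory

/-- The Laguerre polynomial `L_n(t) = Σ_{k=0}^n (n choose k) (−t)^k / k!`. -/
noncomputable def laguerre (n : ℕ) (t : ℝ) : ℝ :=
  ∑ k ∈ Finset.range (n + 1), (n.choose k : ℝ) * (-t) ^ k / (Nat.factorial k : ℝ)

open Asymptotics Filter Topology Set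

lemma laguerre_succ_sub_laguerre (n : ℕ) (t : ℝ) :
    laguerre (n + 1) t - laguerre n t =
      ∑ k ∈ Finset.range (n + 1), (n.choose k : ℝ) * (-t) ^ (k + 1) / (k + 1).factorial := by
  set x : ℕ → ℝ := fun k => (-t) ^ k / k.factorial
  have hL : ∀ m, laguerre m t = ∑ k ∈ Finset.range (m + 1), (m.choose k : ℝ) * x k := fun m => by
    simp only [laguerre, x, mul_div_assoc]
  rw [hL, hL, Finset.sum_range_succ', Finset.sum_range_succ _ n]
  rw [Finset.sum_range_succ' (fun k => (n.choose k : ℝ) * x k)]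
  simp only [Nat.choose_succ_succ', Nat.cast_add, add_mul, Finset.sum_add_distrib, x, mul_div_assoc,
    Finset.sum_range_succ _ n, Nat.choose_succ_self, Nat.choose_self, Nat.choose_zero_right]
  ring

@[fun_prop]
lemma continuous_laguerre (n : ℕ) : Continuous (laguerre n) := by
  unfold laguerre
  fun_prop

lemma hasDerivAt_laguerre_succ_sub_laguerre (n : ℕ) (t : ℝ) :
    HasDerivAt (fun s => laguerre (n + 1) s - laguerre n s) (-laguerre n t) t := by
  rw [funext (laguerre_succ_sub_laguerre n), laguerre, ← Finset.sum_neg_distrib]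
  refine HasDerivAt.fun_sum fun k _ => ?_
  have h := (((hasDerivAt_neg t).pow (k + 1)).const_mul (n.choose k : ℝ)).div_const
    ((k + 1).factorial : ℝ)
  refine h.congr_deriv ?_
  rw [Nat.factorial_succ]
  push_cast
  field_simp

lemma hasDerivAt_laguerre (n : ℕ) (t : ℝ) :
    HasDerivAt (laguerre n) (-∑ m ∈ Finset.range n, laguerre m t) t := by
  induction n with
  | zero =>
    have h : laguerre 0 = fun _ => 1 := funext fun s => by simp [laguerre]
    simpa [h] using hasDerivAt_const t (1 : ℝ)
  | succ n ih =>
    have h := (hasDerivAt_laguerre_succ_sub_laguerre n t).add ih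
    rw [show laguerre (n + 1) = fun s => laguerre (n + 1) s - laguerre n s + laguerre n s by
      simp]
    exact h.congr_deriv (by rw [Finset.sum_range_succ]; ring)

lemma hasDerivAt_exp_mul_laguerre (κ : ℝ) (n : ℕ) (t : ℝ) :
    HasDerivAt (fun s => exp (-κ * s) * laguerre n (κ * s))
      (-κ * (exp (-κ * t) * ∑ m ∈ Finset.range (n + 1), laguerre m (κ * t))) t := by
  have hexp := ((hasDerivAt_id t).const_mul (-κ)).exp
  have hlag := (hasDerivAt_laguerre n (κ * t)).comp t ((hasDerivAt_id t).const_mul κ)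
  refine (hexp.mul hlag).congr_deriv ?_
  rw [Finset.sum_range_succ]
  simp only [id, mul_one, Function.comp_apply]
  ring

lemma laguerre_comp_mul_isLittleO_exp (n : ℕ) (κ : ℝ) {ε : ℝ} (hε : 0 < ε) :
    (fun t => laguerre n (κ * t)) =o[atTop] fun t => exp (ε * t) := by
  simp only [laguerre]
  refine IsLittleO.fun_sum fun k _ => ?_
  have h := (isLittleO_pow_exp_pos_mul_atTop k hε).const_mul_left
    ((n.choose k : ℝ) * (-κ) ^ k / k.factorial)
  refine h.congr_left fun t => ?_
  rw [neg_mul_eq_neg_mul, mul_pow]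
  ring

lemma isBigO_exp_of_abs_le {g : ℝ → ℝ} {A a : ℝ} (hg : ∀ t, 0 ≤ t → |g t| ≤ A * exp (a * t)) :
    g =O[atTop] fun t => exp (a * t) :=
  IsBigO.of_bound A <|
    (eventually_ge_atTop 0).mono fun t ht => by simpa only [norm_eq_abs, abs_exp] using hg t ht

lemma isBigO_exp_mul_laguerre_mul {κ a : ℝ} (ha : a < κ) {g : ℝ → ℝ}
    (hg : g =O[atTop] fun t => exp (a * t)) (m : ℕ) :
    (fun t => exp (-κ * t) * laguerre m (κ * t) * g t) =O[atTop]
      fun t => exp (-((κ - a) / 2) * t) := by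
  have hL := laguerre_comp_mul_isLittleO_exp m κ (ε := (κ - a) / 2) (by linarith)
  refine (((isBigO_refl (fun t => exp (-κ * t)) atTop).mul hL.isBigO).mul hg).congr_right
    fun t => ?_
  rw [← exp_add, ← exp_add]
  ring_nf

lemma integrableOn_exp_mul_laguerre_mul {κ a : ℝ} (ha : a < κ) {g : ℝ → ℝ} (hgc : Continuous g)
    (hg : g =O[atTop] fun t => exp (a * t)) (m : ℕ) :
    IntegrableOn (fun t => exp (-κ * t) * laguerre m (κ * t) * g t) (Ioi 0) :=
  integrable_of_isBigO_exp_neg (by linarith) (by fun_prop)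
    (isBigO_exp_mul_laguerre_mul ha hg m)

lemma tendsto_exp_mul_laguerre_mul {κ a : ℝ} (ha : a < κ) {g : ℝ → ℝ}
    (hg : g =O[atTop] fun t => exp (a * t)) (m : ℕ) :
    Tendsto (fun t => exp (-κ * t) * laguerre m (κ * t) * g t) atTop (𝓝 0) := by
  refine (isBigO_exp_mul_laguerre_mul ha hg m).trans_tendsto ?_
  have hε : -((κ - a) / 2) < 0 := by linarith
  exact tendsto_exp_atBot.comp (tendsto_id.const_mul_atTop_of_neg hε)

theorem stmt_2_general (κ : ℝ) (f : ℝ → ℝ)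
    (hf : ContDiff ℝ 1 f) (hf0 : f 0 = 0)
    (A a : ℝ) (ha : a < κ)
    (hfb : ∀ t : ℝ, 0 ≤ t → |f t| ≤ A * Real.exp (a * t))
    (hfb' : ∀ t : ℝ, 0 ≤ t → |deriv f t| ≤ A * Real.exp (a * t))
    (n : ℕ) :
    ∫ t in Set.Ioi (0 : ℝ), Real.exp (-κ * t) * laguerre n (κ * t) * deriv f t =
      κ * ∑ m ∈ Finset.range (n + 1),
        ∫ t in Set.Ioi (0 : ℝ), Real.exp (-κ * t) * laguerre m (κ * t) * f t := by
  have hfO := isBigO_exp_of_abs_le hfb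
  have hI m := integrableOn_exp_mul_laguerre_mul ha hf.continuous hfO m
  have hsum : ∀ t, -κ * (exp (-κ * t) * ∑ m ∈ Finset.range (n + 1), laguerre m (κ * t)) * f t =
      -κ * ∑ m ∈ Finset.range (n + 1), exp (-κ * t) * laguerre m (κ * t) * f t := fun t => by
    simp only [Finset.mul_sum, Finset.sum_mul, mul_assoc]
  have hI' : IntegrableOn (fun t =>
      -κ * ∑ m ∈ Finset.range (n + 1), exp (-κ * t) * laguerre m (κ * t) * f t) (Ioi 0) :=
    (integrable_finsetSum _ fun m _ => hI m).const_mul (-κ)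
  have hboundary : Tendsto ((fun t => exp (-κ * t) * laguerre n (κ * t)) * f) (𝓝[>] 0) (𝓝 0) := by
    have hcont : Continuous ((fun t => exp (-κ * t) * laguerre n (κ * t)) * f) := by fun_prop
    simpa [hf0] using (hcont.tendsto 0).mono_left nhdsWithin_le_nhds
  rw [integral_Ioi_mul_deriv_eq_deriv_mul (fun t _ => hasDerivAt_exp_mul_laguerre κ n t)
    (fun t _ => ((hf.differentiable one_ne_zero) t).hasDerivAt)
    (integrableOn_exp_mul_laguerre_mul ha (hf.continuous_deriv le_rfl)
      (isBigO_exp_of_abs_le hfb') n)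
    (hI'.congr_fun (fun t _ => (hsum t).symm) measurableSet_Ioi)
    hboundary (tendsto_exp_mul_laguerre_mul ha hfO n)]
  simp_rw [hsum]
  rw [integral_const_mul, integral_finsetSum _ fun m _ => hI m]
  ring

/-- For `κ > 0` and `f` continuously differentiable with `f(0) = 0`,
`|f(t)| ≤ A e^{a t}` and `|f′(t)| ≤ A e^{a t}` on `[0,∞)` for some `A ≥ 0`, `a < κ`,
the `n`-th Laguerre coefficient of `f′` equals `κ Σ_{m=0}^n f_m`. -/
theorem stmt_2 (κ : ℝ) (hκ : 0 < κ) (f : ℝ → ℝ)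
    (hf : ContDiff ℝ 1 f) (hf0 : f 0 = 0)
    (A a : ℝ) (hA : 0 ≤ A) (ha : a < κ)
    (hfb : ∀ t : ℝ, 0 ≤ t → |f t| ≤ A * Real.exp (a * t))
    (hfb' : ∀ t : ℝ, 0 ≤ t → |deriv f t| ≤ A * Real.exp (a * t))
    (n : ℕ) :
    ∫ t in Set.Ioi (0 : ℝ), Real.exp (-κ * t) * laguerre n (κ * t) * deriv f t =
      κ * ∑ m ∈ Finset.range (n + 1),
        ∫ t in Set.Ioi (0 : ℝ), Real.exp (-κ * t) * laguerre m (κ * t) * f t :=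
  stmt_2_general κ f hf hf0 A a ha hfb hfb' n
end

section
/- For every n ≥ 0, the function Φ_n is differentiable on (0,∞) and Φ_n′(r) = K₀(γr) ṽ_n(r) + K₁(γr) w̃_n(r) for all r > 0, where ṽ_n(r) = 2 Σ_{k=1}^{⌊n/2⌋} k a_{n,2k} r^{2k−1} − γ w_n(r) and w̃_n(r) = 2 Σ_{k=1}^{⌊(n−1)/2⌋} k a_{n,2k+1} r^{2k} − γ v_n(r). -/
open Real Filter

/-- `I₀(z) = Σ_{n=0}^∞ (z/2)^{2n}/(n!)²`. -/
noncomputable def besselI0 (z : ℝ) : ℝ :=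
  ∑' n : ℕ, (z / 2) ^ (2 * n) / (Nat.factorial n : ℝ) ^ 2

/-- `I₁(z) = Σ_{n=0}^∞ (z/2)^{2n+1}/(n!(n+1)!)`. -/
noncomputable def besselI1 (z : ℝ) : ℝ :=
  ∑' n : ℕ, (z / 2) ^ (2 * n + 1) / ((Nat.factorial n : ℝ) * (Nat.factorial (n + 1) : ℝ))

/-- `ψ(0) = 0`, `ψ(n) = Σ_{m=1}^n 1/m`. -/
noncomputable def psiHarm (n : ℕ) : ℝ := ∑ m ∈ Finset.Icc 1 n, (1 / m : ℝ)

/-- `K₀(z) = −(ln(z/2) + C) I₀(z) + Σ_{n=1}^∞ (ψ(n)/(n!)²) (z/2)^{2n}`. -/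
noncomputable def besselK0 (z : ℝ) : ℝ :=
  -(Real.log (z / 2) + Real.eulerMascheroniConstant) * besselI0 z +
    ∑' n : ℕ, psiHarm (n + 1) / (Nat.factorial (n + 1) : ℝ) ^ 2 * (z / 2) ^ (2 * (n + 1))

/-- `K₁(z) = 1/z + (ln(z/2) + C) I₁(z) − (1/2) Σ_{n=0}^∞ ((ψ(n+1)+ψ(n))/(n!(n+1)!)) (z/2)^{2n+1}`. -/
noncomputable def besselK1 (z : ℝ) : ℝ :=
  1 / z + (Real.log (z / 2) + Real.eulerMascheroniConstant) * besselI1 z -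
    (1 / 2) * ∑' n : ℕ, (psiHarm (n + 1) + psiHarm n) /
      ((Nat.factorial n : ℝ) * (Nat.factorial (n + 1) : ℝ)) * (z / 2) ^ (2 * n + 1)

/-- `β_n = κ²(n+1)/c²`. -/
noncomputable def betaC (κ c : ℝ) (n : ℕ) : ℝ := κ ^ 2 * (n + 1) / c ^ 2

/-- `γ = κ/c`. -/
noncomputable def gammaC (κ c : ℝ) : ℝ := κ / c

/-- `v_n(r) = Σ_{k=0}^{⌊n/2⌋} a_{n,2k} r^{2k}`. -/
noncomputable def vPoly (a : ℕ → ℕ → ℝ) (n : ℕ) (r : ℝ) : ℝ :=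
  ∑ k ∈ Finset.range (n / 2 + 1), a n (2 * k) * r ^ (2 * k)

/-- `w_n(r) = Σ_{k=0}^{⌊(n−1)/2⌋} a_{n,2k+1} r^{2k+1}` (so `w₀ = 0` since `a_{0,1} = 0`). -/
noncomputable def wPoly (a : ℕ → ℕ → ℝ) (n : ℕ) (r : ℝ) : ℝ :=
  ∑ k ∈ Finset.range ((n - 1) / 2 + 1), a n (2 * k + 1) * r ^ (2 * k + 1)

/-- `Φ_n(r) = K₀(γr) v_n(r) + K₁(γr) w_n(r)`. -/
noncomputable def PhiFund (γ : ℝ) (a : ℕ → ℕ → ℝ) (n : ℕ) (r : ℝ) : ℝ :=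
  besselK0 (γ * r) * vPoly a n r + besselK1 (γ * r) * wPoly a n r

/-- `ṽ_n(r) = 2 Σ_{k=1}^{⌊n/2⌋} k a_{n,2k} r^{2k−1} − γ w_n(r)`. -/
noncomputable def vTilde (γ : ℝ) (a : ℕ → ℕ → ℝ) (n : ℕ) (r : ℝ) : ℝ :=
  2 * ∑ k ∈ Finset.Icc 1 (n / 2), (k : ℝ) * a n (2 * k) * r ^ (2 * k - 1) - γ * wPoly a n r

/-- `w̃_n(r) = 2 Σ_{k=1}^{⌊(n−1)/2⌋} k a_{n,2k+1} r^{2k} − γ v_n(r)`. -/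
noncomputable def wTilde (γ : ℝ) (a : ℕ → ℕ → ℝ) (n : ℕ) (r : ℝ) : ℝ :=
  2 * ∑ k ∈ Finset.Icc 1 ((n - 1) / 2), (k : ℝ) * a n (2 * k + 1) * r ^ (2 * k) -
    γ * vPoly a n r

/-- `v̄_n(r) = 2 Σ_{k=1}^{⌊n/2⌋} k(2k−1) a_{n,2k} r^{2k−2}
  − γ Σ_{k=0}^{⌊(n−1)/2⌋} (2k+1) a_{n,2k+1} r^{2k} − γ w̃_n(r)`. -/
noncomputable def vBar (γ : ℝ) (a : ℕ → ℕ → ℝ) (n : ℕ) (r : ℝ) : ℝ :=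
  2 * ∑ k ∈ Finset.Icc 1 (n / 2), (k : ℝ) * (2 * k - 1 : ℝ) * a n (2 * k) * r ^ (2 * k - 2) -
    γ * ∑ k ∈ Finset.range ((n - 1) / 2 + 1), (2 * k + 1 : ℝ) * a n (2 * k + 1) * r ^ (2 * k) -
    γ * wTilde γ a n r

/-- `w̄_n(r) = 4 Σ_{k=1}^{⌊(n−1)/2⌋} k² a_{n,2k+1} r^{2k}
  − 2γ Σ_{k=1}^{⌊n/2⌋} k a_{n,2k} r^{2k} − γ r ṽ_n(r) − w̃_n(r)`. -/
noncomputable def wBar (γ : ℝ) (a : ℕ → ℕ → ℝ) (n : ℕ) (r : ℝ) : ℝ :=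
  4 * ∑ k ∈ Finset.Icc 1 ((n - 1) / 2), (k : ℝ) ^ 2 * a n (2 * k + 1) * r ^ (2 * k) -
    2 * γ * ∑ k ∈ Finset.Icc 1 (n / 2), (k : ℝ) * a n (2 * k) * r ^ (2 * k) -
    γ * r * vTilde γ a n r - wTilde γ a n r

/-! Writing `x = z / 2`, `I₀, I₁` and the power-series parts of `K₀, K₁` are four series in `x`
whose coefficients are `O(1/n!)`, so they can be differentiated termwise; comparing coefficients
with `ψ(n+1) = ψ(n) + 1/(n+1)` yields `K₀' = -K₁` and `K₁'(z) = -K₀(z) - K₁(z)/z`. The formula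
for `Φ_n'` then follows from the product and chain rules: the `-K₁(γr)/(γr) · γ w_n(r)` term
cancels the `w_n(r)/r` part of `w_n'(r)`. -/

open scoped Nat

lemma psiHarm_zero : psiHarm 0 = 0 := by simp [psiHarm]

lemma psiHarm_succ (n : ℕ) : psiHarm (n + 1) = psiHarm n + 1 / (n + 1) := by
  rw [psiHarm, Finset.sum_Icc_succ_top (by omega), ← psiHarm]
  push_cast
  rfl

lemma psiHarm_nonneg (n : ℕ) : 0 ≤ psiHarm n :=
  Finset.sum_nonneg fun _ _ => by positivity

lemma psiHarm_le (n : ℕ) : psiHarm n ≤ n := by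
  induction n with
  | zero => simp [psiHarm_zero]
  | succ n ih =>
    have : 1 / ((n : ℝ) + 1) ≤ 1 := div_le_one_of_le₀ (by linarith) (by positivity)
    rw [psiHarm_succ]
    push_cast
    linarith

section PowerSeries

variable {c : ℕ → ℝ} {e : ℕ → ℕ} {C : ℝ}

lemma abs_pow_le_sq_pow_succ {y R : ℝ} {m n : ℕ} (hy : |y| ≤ R) (hR : 1 ≤ R)
    (hm : m ≤ 2 * n + 2) : |y| ^ m ≤ (R ^ 2) ^ (n + 1) :=
  calc |y| ^ m ≤ R ^ m := pow_le_pow_left₀ (abs_nonneg y) hy m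
    _ ≤ R ^ (2 * n + 2) := pow_le_pow_right₀ hR hm
    _ = (R ^ 2) ^ (n + 1) := by ring

lemma summable_coeff_mul_pow (hc : ∀ n, |c n| ≤ C / n !) (he : ∀ n, e n ≤ 2 * n + 2)
    (x : ℝ) : Summable fun n => c n * x ^ e n := by
  set R := |x| + 1
  refine .of_norm_bounded ((Real.summable_pow_div_factorial (R ^ 2)).mul_left (C * R ^ 2))
    fun n => ?_
  rw [Real.norm_eq_abs, abs_mul, abs_pow]
  calc |c n| * |x| ^ e n ≤ C / n ! * (R ^ 2) ^ (n + 1) :=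
        mul_le_mul (hc n) (abs_pow_le_sq_pow_succ (by linarith) (by linarith [abs_nonneg x]) (he n))
          (by positivity) ((abs_nonneg _).trans (hc n))
    _ = C * R ^ 2 * ((R ^ 2) ^ n / n !) := by ring

lemma hasDerivAt_tsum_coeff_mul_pow (hc : ∀ n, |c n| ≤ C / n !) (he : ∀ n, e n ≤ 2 * n + 2)
    (x : ℝ) :
    HasDerivAt (fun y => ∑' n, c n * y ^ e n) (∑' n, c n * (e n * x ^ (e n - 1))) x := by
  set R := |x| + 1
  have hR : 1 ≤ R := by linarith [abs_nonneg x]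
  have hx : x ∈ Set.Ioo (-R) R := by constructor <;> linarith [neg_abs_le x, le_abs_self x]
  refine hasDerivAt_tsum_of_isPreconnected
    ((Real.summable_pow_div_factorial (2 * R ^ 2)).mul_left (2 * C * R ^ 2)) isOpen_Ioo
    isPreconnected_Ioo (fun n y _ => (hasDerivAt_pow (e n) y).const_mul (c n))
    (fun n y hy => ?_) hx (summable_coeff_mul_pow hc he x) hx
  have he2 : (e n : ℝ) ≤ 2 ^ (n + 1) := by
    have : n < 2 ^ n := Nat.lt_two_pow_self
    exact_mod_cast (he n).trans (by rw [pow_succ]; omega)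
  rw [Real.norm_eq_abs, abs_mul, abs_mul, abs_pow, Nat.abs_cast]
  calc |c n| * (e n * |y| ^ (e n - 1)) ≤ C / n ! * (2 ^ (n + 1) * (R ^ 2) ^ (n + 1)) := by
        gcongr
        · exact (abs_nonneg _).trans (hc n)
        · exact hc n
        · exact abs_pow_le_sq_pow_succ (abs_le.mpr ⟨hy.1.le, hy.2.le⟩) hR (by have := he n; omega)
    _ = 2 * C * R ^ 2 * ((2 * R ^ 2) ^ n / n !) := by rw [pow_succ 2, mul_pow]; ring

end PowerSeries

/- In the variable `x = z / 2`: `besselI0 z = i0Series (z / 2)`, `besselI1 z = i1Series (z / 2)`,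
and `k0Series`, `k1Series` are the power series appearing in `besselK0`, `besselK1`. -/

noncomputable def i0Series (x : ℝ) : ℝ := ∑' n : ℕ, x ^ (2 * n) / (n ! : ℝ) ^ 2

noncomputable def i1Series (x : ℝ) : ℝ := ∑' n : ℕ, x ^ (2 * n + 1) / ((n ! : ℝ) * (n + 1)! )

noncomputable def k0Series (x : ℝ) : ℝ :=
  ∑' n : ℕ, psiHarm (n + 1) / ((n + 1)! : ℝ) ^ 2 * x ^ (2 * (n + 1))

noncomputable def k1Series (x : ℝ) : ℝ :=
  ∑' n : ℕ, (psiHarm (n + 1) + psiHarm n) / ((n ! : ℝ) * (n + 1)!) * x ^ (2 * n + 1)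

lemma one_le_factorial_cast (n : ℕ) : (1 : ℝ) ≤ n ! := by exact_mod_cast Nat.factorial_pos n

lemma abs_inv_factorial_sq_le (n : ℕ) : |((n ! : ℝ) ^ 2)⁻¹| ≤ 1 / n ! := by
  rw [abs_of_nonneg (by positivity), one_div]
  exact inv_anti₀ (by positivity) (le_self_pow₀ (one_le_factorial_cast n) two_ne_zero)

lemma abs_inv_factorial_mul_factorial_succ_le (n : ℕ) :
    |((n ! : ℝ) * (n + 1)!)⁻¹| ≤ 1 / n ! := by
  rw [abs_of_nonneg (by positivity), one_div]
  exact inv_anti₀ (by positivity) (le_mul_of_one_le_right (by positivity) (one_le_factorial_cast _))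

lemma abs_k0Series_coeff_le (n : ℕ) : |psiHarm (n + 1) / ((n + 1)! : ℝ) ^ 2| ≤ 1 / n ! := by
  have hψ := psiHarm_le (n + 1)
  have hf := one_le_factorial_cast n
  rw [abs_of_nonneg (div_nonneg (psiHarm_nonneg _) (by positivity)), Nat.factorial_succ,
    div_le_div_iff₀ (by positivity) (by positivity)]
  push_cast at hψ ⊢
  have h1 : (1 : ℝ) ≤ (n + 1) * n ! := by nlinarith
  nlinarith [mul_le_mul_of_nonneg_right hψ (by positivity : (0 : ℝ) ≤ n !)]

lemma abs_k1Series_coeff_le (n : ℕ) :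
    |(psiHarm (n + 1) + psiHarm n) / ((n ! : ℝ) * (n + 1)!)| ≤ 2 / n ! := by
  have hψ := psiHarm_le (n + 1)
  have hψ' := psiHarm_le n
  have hf := one_le_factorial_cast n
  rw [abs_of_nonneg (div_nonneg (add_nonneg (psiHarm_nonneg _) (psiHarm_nonneg _)) (by positivity)),
    Nat.factorial_succ, div_le_div_iff₀ (by positivity) (by positivity)]
  push_cast at hψ ⊢
  nlinarith [mul_le_mul_of_nonneg_right (add_le_add hψ hψ') (by positivity : (0 : ℝ) ≤ n !),
    mul_le_mul_of_nonneg_left hf (by positivity : (0 : ℝ) ≤ (n + 1) * n !)]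

lemma hasSum_i0Series (x : ℝ) : HasSum (fun n => x ^ (2 * n) / (n ! : ℝ) ^ 2) (i0Series x) :=
  ((summable_coeff_mul_pow (e := fun n => 2 * n) abs_inv_factorial_sq_le (fun n => by omega)
    x).congr fun n => inv_mul_eq_div _ _).hasSum

lemma hasSum_i1Series (x : ℝ) :
    HasSum (fun n => x ^ (2 * n + 1) / ((n ! : ℝ) * (n + 1)!)) (i1Series x) :=
  ((summable_coeff_mul_pow (e := fun n => 2 * n + 1) abs_inv_factorial_mul_factorial_succ_le
    (fun n => by omega) x).congr fun n => inv_mul_eq_div _ _).hasSum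

lemma hasSum_k0Series (x : ℝ) :
    HasSum (fun n => psiHarm (n + 1) / ((n + 1)! : ℝ) ^ 2 * x ^ (2 * (n + 1))) (k0Series x) :=
  (summable_coeff_mul_pow (e := fun n => 2 * (n + 1)) abs_k0Series_coeff_le
    (fun n => by omega) x).hasSum

lemma hasSum_k1Series (x : ℝ) :
    HasSum (fun n => (psiHarm (n + 1) + psiHarm n) / ((n ! : ℝ) * (n + 1)!) * x ^ (2 * n + 1))
      (k1Series x) :=
  (summable_coeff_mul_pow (e := fun n => 2 * n + 1) abs_k1Series_coeff_le
    (fun n => by omega) x).hasSum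

lemma HasSum.of_succ_of_zero {f : ℕ → ℝ} {a : ℝ} (h : HasSum (fun n => f (n + 1)) a)
    (h0 : f 0 = 0) : HasSum f a := by
  simpa [h0] using h.zero_add

lemma hasDerivAt_i0Series (x : ℝ) : HasDerivAt i0Series (2 * i1Series x) x := by
  have hd := hasDerivAt_tsum_coeff_mul_pow (e := fun n => 2 * n) abs_inv_factorial_sq_le
    (fun n => by omega) x
  have hsum : HasSum (fun n => ((n ! : ℝ) ^ 2)⁻¹ * ((2 * n : ℕ) * x ^ (2 * n - 1)))
      (2 * i1Series x) := by
    refine (((hasSum_i1Series x).mul_left 2).congr_fun fun n => ?_).of_succ_of_zero (by simp)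
    rw [show 2 * (n + 1) - 1 = 2 * n + 1 by omega, Nat.factorial_succ]
    push_cast
    field_simp
  rw [hsum.tsum_eq] at hd
  convert hd using 1
  funext y
  exact tsum_congr fun n => (inv_mul_eq_div _ _).symm

lemma hasDerivAt_i1Series {x : ℝ} (hx : x ≠ 0) :
    HasDerivAt i1Series (2 * i0Series x - i1Series x / x) x := by
  have hd := hasDerivAt_tsum_coeff_mul_pow (e := fun n => 2 * n + 1)
    abs_inv_factorial_mul_factorial_succ_le (fun n => by omega) x
  have hsum : HasSum (fun n => ((n ! : ℝ) * (n + 1)!)⁻¹ * ((2 * n + 1 : ℕ) * x ^ (2 * n + 1 - 1)))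
      (2 * i0Series x - i1Series x / x) := by
    refine (((hasSum_i0Series x).mul_left 2).sub ((hasSum_i1Series x).div_const x)).congr_fun
      fun n => ?_
    rw [Nat.add_sub_cancel, Nat.factorial_succ]
    push_cast
    field_simp
    ring
  rw [hsum.tsum_eq] at hd
  convert hd using 1
  funext y
  exact tsum_congr fun n => (inv_mul_eq_div _ _).symm

lemma hasDerivAt_k0Series {x : ℝ} (hx : x ≠ 0) :
    HasDerivAt k0Series (k1Series x + (i0Series x - 1) / x) x := by
  have hd := hasDerivAt_tsum_coeff_mul_pow (e := fun n => 2 * (n + 1)) abs_k0Series_coeff_le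
    (fun n => by omega) x
  have hi0 : HasSum (fun n => x ^ (2 * (n + 1)) / ((n + 1)! : ℝ) ^ 2) (i0Series x - 1) := by
    simpa using (hasSum_nat_add_iff' 1).mpr (hasSum_i0Series x)
  have hsum : HasSum (fun n => psiHarm (n + 1) / ((n + 1)! : ℝ) ^ 2 *
      ((2 * (n + 1) : ℕ) * x ^ (2 * (n + 1) - 1))) (k1Series x + (i0Series x - 1) / x) := by
    refine ((hasSum_k1Series x).add (hi0.div_const x)).congr_fun fun n => ?_
    rw [show 2 * (n + 1) - 1 = 2 * n + 1 by omega, psiHarm_succ, Nat.factorial_succ]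
    push_cast
    field_simp
    ring
  rwa [hsum.tsum_eq] at hd

lemma hasDerivAt_k1Series {x : ℝ} (hx : x ≠ 0) :
    HasDerivAt k1Series (4 * k0Series x + (2 * i1Series x - k1Series x) / x) x := by
  have hd := hasDerivAt_tsum_coeff_mul_pow (e := fun n => 2 * n + 1) abs_k1Series_coeff_le
    (fun n => by omega) x
  have hk0 : HasSum (fun n => psiHarm n / (n ! : ℝ) ^ 2 * x ^ (2 * n)) (k0Series x) :=
    HasSum.of_succ_of_zero (hasSum_k0Series x) (by simp [psiHarm_zero])
  have hsum : HasSum (fun n => (psiHarm (n + 1) + psiHarm n) / ((n ! : ℝ) * (n + 1)!) *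
      ((2 * n + 1 : ℕ) * x ^ (2 * n + 1 - 1)))
      (4 * k0Series x + (2 * i1Series x - k1Series x) / x) := by
    refine ((hk0.mul_left 4).add ((((hasSum_i1Series x).mul_left 2).sub
      (hasSum_k1Series x)).div_const x)).congr_fun fun n => ?_
    rw [Nat.add_sub_cancel, psiHarm_succ, Nat.factorial_succ]
    push_cast
    field_simp
    ring
  rwa [hsum.tsum_eq] at hd

lemma hasDerivAt_half (z : ℝ) : HasDerivAt (fun z : ℝ => z / 2) (1 / 2) z := by
  simpa using (hasDerivAt_id z).div_const 2

lemma hasDerivAt_log_half_add (a : ℝ) {z : ℝ} (hz : z ≠ 0) :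
    HasDerivAt (fun z => Real.log (z / 2) + a) (1 / z) z := by
  refine (((Real.hasDerivAt_log (div_ne_zero hz two_ne_zero)).comp z
    (hasDerivAt_half z)).add_const a).congr_deriv ?_
  field_simp

lemma hasDerivAt_besselK0 {z : ℝ} (hz : 0 < z) : HasDerivAt besselK0 (-besselK1 z) z := by
  have hx : z / 2 ≠ 0 := by positivity
  have h := ((hasDerivAt_log_half_add eulerMascheroniConstant hz.ne').neg.mul
    ((hasDerivAt_i0Series (z / 2)).comp z (hasDerivAt_half z))).add
    ((hasDerivAt_k0Series hx).comp z (hasDerivAt_half z))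
  refine h.congr_deriv ?_
  show _ = -(1 / z + (log (z / 2) + eulerMascheroniConstant) * i1Series (z / 2) -
    1 / 2 * k1Series (z / 2))
  simp only [Function.comp, Pi.neg_apply]
  field_simp
  ring

lemma hasDerivAt_besselK1 {z : ℝ} (hz : 0 < z) :
    HasDerivAt besselK1 (-besselK0 z - besselK1 z / z) z := by
  have hx : z / 2 ≠ 0 := by positivity
  have h := (((hasDerivAt_const z (1 : ℝ)).div (hasDerivAt_id' z) hz.ne').add
    ((hasDerivAt_log_half_add eulerMascheroniConstant hz.ne').mul
    ((hasDerivAt_i1Series hx).comp z (hasDerivAt_half z)))).sub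
    (((hasDerivAt_k1Series hx).comp z (hasDerivAt_half z)).const_mul (1 / 2))
  refine h.congr_deriv ?_
  show _ = -(-(log (z / 2) + eulerMascheroniConstant) * i0Series (z / 2) + k0Series (z / 2)) -
      (1 / z + (log (z / 2) + eulerMascheroniConstant) * i1Series (z / 2) -
        1 / 2 * k1Series (z / 2)) / z
  simp only [Function.comp]
  field_simp
  ring

lemma sum_Icc_one_eq_sum_range {f : ℕ → ℝ} (m : ℕ) (hf : f 0 = 0) :
    ∑ k ∈ Finset.Icc 1 m, f k = ∑ k ∈ Finset.range (m + 1), f k := by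
  rw [Finset.range_eq_Ico, Finset.sum_eq_sum_Ico_succ_bot (by omega), hf, zero_add]
  rfl

section Polynomials

variable (a : ℕ → ℕ → ℝ) (n : ℕ) (r : ℝ)

lemma hasDerivAt_vPoly :
    HasDerivAt (vPoly a n)
      (2 * ∑ k ∈ Finset.Icc 1 (n / 2), (k : ℝ) * a n (2 * k) * r ^ (2 * k - 1)) r := by
  refine (HasDerivAt.fun_sum fun k _ =>
    (hasDerivAt_pow (2 * k) r).const_mul (a n (2 * k))).congr_deriv ?_
  rw [Finset.mul_sum, sum_Icc_one_eq_sum_range _ (by simp)]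
  refine Finset.sum_congr rfl fun k _ => ?_
  push_cast
  ring

lemma hasDerivAt_wPoly :
    HasDerivAt (wPoly a n)
      (2 * ∑ k ∈ Finset.Icc 1 ((n - 1) / 2), (k : ℝ) * a n (2 * k + 1) * r ^ (2 * k) +
        ∑ k ∈ Finset.range ((n - 1) / 2 + 1), a n (2 * k + 1) * r ^ (2 * k)) r := by
  refine (HasDerivAt.fun_sum fun k _ =>
    (hasDerivAt_pow (2 * k + 1) r).const_mul (a n (2 * k + 1))).congr_deriv ?_
  rw [Finset.mul_sum, sum_Icc_one_eq_sum_range _ (by simp), ← Finset.sum_add_distrib]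
  refine Finset.sum_congr rfl fun k _ => ?_
  rw [Nat.add_sub_cancel]
  push_cast
  ring

lemma wPoly_eq_mul_sum :
    wPoly a n r = r * ∑ k ∈ Finset.range ((n - 1) / 2 + 1), a n (2 * k + 1) * r ^ (2 * k) := by
  rw [wPoly, Finset.mul_sum]
  exact Finset.sum_congr rfl fun k _ => by ring

end Polynomials

lemma hasDerivAt_phiFund {γ : ℝ} (hγ : 0 < γ) (a : ℕ → ℕ → ℝ) (n : ℕ) {r : ℝ} (hr : 0 < r) :
    HasDerivAt (PhiFund γ a n)
      (besselK0 (γ * r) * vTilde γ a n r + besselK1 (γ * r) * wTilde γ a n r) r := by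
  have hγr : 0 < γ * r := mul_pos hγ hr
  have hlin : HasDerivAt (fun r => γ * r) γ r := by simpa using (hasDerivAt_id r).const_mul γ
  refine ((((hasDerivAt_besselK0 hγr).comp r hlin).mul (hasDerivAt_vPoly a n r)).add
    (((hasDerivAt_besselK1 hγr).comp r hlin).mul (hasDerivAt_wPoly a n r))).congr_deriv ?_
  rw [vTilde, wTilde, wPoly_eq_mul_sum]
  simp only [Function.comp]
  field_simp
  ring

theorem stmt_13_general
    (κ c : ℝ) (hκ : 0 < κ) (hc : 0 < c) (a : ℕ → ℕ → ℝ)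
    (n : ℕ) :
    ∀ r : ℝ, 0 < r →
      HasDerivAt (PhiFund (gammaC κ c) a n)
        (besselK0 (gammaC κ c * r) * vTilde (gammaC κ c) a n r +
          besselK1 (gammaC κ c * r) * wTilde (gammaC κ c) a n r) r :=
  fun _ hr => hasDerivAt_phiFund (div_pos hκ hc) a n hr

/-- For every `n ≥ 0`, `Φ_n` is differentiable on `(0,∞)` and
`Φ_n′(r) = K₀(γr) ṽ_n(r) + K₁(γr) w̃_n(r)` for all `r > 0`. -/
theorem stmt_13
    (κ c : ℝ) (hκ : 0 < κ) (hc : 0 < c) (a : ℕ → ℕ → ℝ)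
    (ha0 : ∀ n : ℕ, a n 0 = 1)
    (hann : ∀ n : ℕ, 1 ≤ n →
      a n n = -(betaC κ c 1 * a (n - 1) (n - 1)) / (2 * gammaC κ c * n))
    (hrec : ∀ n k : ℕ, 1 ≤ k → k ≤ n - 1 →
      a n k = (1 / (2 * gammaC κ c * k)) *
        (4 * (((k + 1) / 2 : ℕ) : ℝ) ^ 2 * a n (k + 1) -
          ∑ m ∈ Finset.Icc (k - 1) (n - 1), betaC κ c (n - m) * a m (k - 1)))
    (hzero : ∀ n k : ℕ, n < k → a n k = 0)
    (n : ℕ) :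
    ∀ r : ℝ, 0 < r →
      HasDerivAt (PhiFund (gammaC κ c) a n)
        (besselK0 (gammaC κ c * r) * vTilde (gammaC κ c) a n r +
          besselK1 (gammaC κ c * r) * wTilde (gammaC κ c) a n r) r :=
  stmt_13_general κ c hκ hc a n
end
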